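/- arXiv:2105.14033 — 5 statements merged into one kernel-verified Lean document; each statement's English description precedes it below -/
import Mathlib

section
/- Suppose the sequences (X^k, y^k, S^k) (k ≥ 1), X^0 ∈ S^n_+, σ_k (k ≥ 0) and ε_k satisfy the iPGM conditions, and suppose there is M > 0 with ‖y^k‖ ≤ M for all k ≥ 1. Let X* ∈ S^n satisfy X* ⪰ 0 and A(X*) = b (in particular X* may be an optimal solution of (P)). Then for every k ≥ 1: ⟨C, X^k − X*⟩ ≤ (1/k) ( (1/(2σ_0))‖X^0 − X*‖² + 2M Σ_{i=1}^{k} i ε_i ). -/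
set_option autoImplicit false

open Matrix Finset Filter
open scoped RealInnerProductSpace

noncomputable section

/-- The trace inner product `⟨X, Y⟩ = trace (Xᵀ * Y)` on real `n × n` matrices. -/
def mInner {n : ℕ} (X Y : Matrix (Fin n) (Fin n) ℝ) : ℝ := (Xᵀ * Y).trace

/-- The Frobenius norm induced by the trace inner product. -/
def mNorm {n : ℕ} (X : Matrix (Fin n) (Fin n) ℝ) : ℝ := Real.sqrt (mInner X X)

/-- `ℝ^m` with the Euclidean inner product. -/
abbrev Vec (m : ℕ) := EuclideanSpace ℝ (Fin m)

/-!
Each iPGM iteration is a proximal step. Testing the dual equation against `X^k - Z` for a PSD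
matrix `Z`, complementarity and the self-duality of the PSD cone remove the `S^k` term, and the
three-point identity gives, whenever `‖A(Z) - b‖ ≤ δ`,
`⟨C, X^k - Z⟩ ≤ M (ε_k + δ) + (‖X^{k-1} - Z‖² - ‖X^k - Z‖²) / (2σ_k)`.
With `Z = X*` this is a telescoping descent inequality; with `Z = X^{k-1}` it shows that the
objective value rises by at most `M (ε_k + ε_{k-1})` per step. Together they make the potential
`k ⟨C, X^k - X*⟩ + ‖X^k - X*‖² / (2σ_k) + M k ε_k` grow by at most `2M (k+1) ε_{k+1}` per step.
-/

open scoped ComplexOrder in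
theorem Matrix.PosSemidef.trace_mul_nonneg {𝕜 ι : Type*} [RCLike 𝕜] [Fintype ι]
    {P Q : Matrix ι ι 𝕜} (hP : P.PosSemidef) (hQ : Q.PosSemidef) : 0 ≤ (P * Q).trace := by
  classical
  open scoped MatrixOrder Matrix.Norms.L2Operator in
  obtain ⟨B, rfl⟩ := CStarAlgebra.nonneg_iff_eq_star_mul_self.mp hP.nonneg
  rw [Matrix.mul_assoc, Matrix.trace_mul_comm, Matrix.star_eq_conjTranspose]
  exact (hQ.mul_mul_conjTranspose_same B).trace_nonneg

def Matrix.toEuclideanVec {m n : Type*} [Fintype m] [Fintype n] :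
    Matrix m n ℝ →ₗ[ℝ] EuclideanSpace ℝ (n × m) where
  toFun X := WithLp.toLp 2 X.vec
  map_add' X Y := by rw [Matrix.vec_add]; rfl
  map_smul' c X := by rw [Matrix.vec_smul]; rfl

section TraceInnerProduct

variable {n : ℕ}

lemma mInner_eq_inner (X Y : Matrix (Fin n) (Fin n) ℝ) :
    mInner X Y = ⟪X.toEuclideanVec, Y.toEuclideanVec⟫ := by
  rw [Matrix.toEuclideanVec, LinearMap.coe_mk, AddHom.coe_mk, EuclideanSpace.inner_toLp_toLp,
    star_trivial, dotProduct_comm, Matrix.vec_dotProduct_vec, mInner]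

lemma mNorm_eq_norm (X : Matrix (Fin n) (Fin n) ℝ) : mNorm X = ‖X.toEuclideanVec‖ := by
  rw [mNorm, mInner_eq_inner, real_inner_self_eq_norm_sq, Real.sqrt_sq (norm_nonneg _)]

lemma mInner_sub_right (C X Y : Matrix (Fin n) (Fin n) ℝ) :
    mInner C (X - Y) = mInner C X - mInner C Y := by
  simp only [mInner_eq_inner, map_sub, inner_sub_right]

lemma mInner_nonneg_of_posSemidef {P Q : Matrix (Fin n) (Fin n) ℝ} (hP : P.PosSemidef)
    (hQ : Q.PosSemidef) : 0 ≤ mInner P Q := by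
  rw [mInner, ← Matrix.conjTranspose_eq_transpose_of_trivial, hP.1]
  exact hP.trace_mul_nonneg hQ

end TraceInnerProduct

section InnerProductSpace

variable {E : Type*} [NormedAddCommGroup E] [InnerProductSpace ℝ E]

theorem inner_sub_le_of_norm_sub_le {u v b ξ : E} {α β M : ℝ} (hu : ‖u - b‖ ≤ α)
    (hv : ‖v - b‖ ≤ β) (hξ : ‖ξ‖ ≤ M) : ⟪u - v, ξ⟫ ≤ M * (α + β) := by
  have huv : ‖u - v‖ ≤ α + β := calc
    ‖u - v‖ ≤ ‖u - b‖ + ‖b - v‖ := norm_sub_le_norm_sub_add_norm_sub u b v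
    _ ≤ α + β := by rw [norm_sub_rev b]; exact add_le_add hu hv
  calc ⟪u - v, ξ⟫ ≤ ‖u - v‖ * ‖ξ‖ := real_inner_le_norm _ _
    _ ≤ (α + β) * M := mul_le_mul huv hξ (norm_nonneg _) ((norm_nonneg _).trans huv)
    _ = M * (α + β) := mul_comm _ _

theorem inner_sub_le_of_proximal_step {c g s x y z : E} {σ : ℝ} (hσ : 0 < σ)
    (hstep : g + s - c = (1 / σ) • (x - y)) (hxs : ⟪x, s⟫ = 0) (hzs : 0 ≤ ⟪z, s⟫) :
    ⟪c, x - z⟫ ≤ ⟪g, x - z⟫ + 1 / (2 * σ) * (‖y - z‖ ^ 2 - ‖x - z‖ ^ 2) := by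
  have hc : c = g + s - (1 / σ) • (x - y) := by rw [← hstep]; abel
  have three_point : ‖x - z‖ ^ 2 - ‖y - z‖ ^ 2 ≤ 2 * ⟪x - y, x - z⟫ := by
    rw [← sub_sub_sub_cancel_left z y x, norm_sub_sq_real (x - z) (x - y), real_inner_comm]
    linarith [sq_nonneg ‖x - y‖]
  have hs : ⟪s, x - z⟫ = -⟪z, s⟫ := by
    rw [inner_sub_right, real_inner_comm x, hxs, real_inner_comm, zero_sub]
  have hσ' : 1 / σ = 1 / (2 * σ) * 2 := by field_simp
  rw [hc, inner_sub_left, inner_add_left, real_inner_smul_left, hs, hσ']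
  linarith [mul_le_mul_of_nonneg_left three_point (by positivity : 0 ≤ 1 / (2 * σ))]

end InnerProductSpace

section Descent

variable {h d a ε : ℕ → ℝ} {M : ℝ}

theorem descent_potential_le (hd : ∀ k, 0 ≤ d k) (ha : Antitone a)
    (hdescent : ∀ k, h (k + 1) ≤ M * ε (k + 1) + a (k + 1) * (d k - d (k + 1)))
    (hnear : ∀ k, 1 ≤ k → h (k + 1) ≤ h k + M * (ε (k + 1) + ε k)) (k : ℕ) :
    k * h k + a k * d k + M * (k * ε k) ≤ a 0 * d 0 + 2 * M * ∑ i ∈ Icc 1 k, i * ε i := by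
  induction k with
  | zero => simp
  | succ k ih =>
    have hk : (k : ℝ) * h (k + 1) ≤ k * (h k + M * (ε (k + 1) + ε k)) := by
      rcases Nat.eq_zero_or_pos k with rfl | hk
      · simp
      · exact mul_le_mul_of_nonneg_left (hnear k hk) k.cast_nonneg
    have hak : a (k + 1) * d k ≤ a k * d k := mul_le_mul_of_nonneg_right (ha k.le_succ) (hd k)
    rw [sum_Icc_succ_top (by omega)]
    push_cast
    linarith [hdescent k]

theorem le_one_div_mul_of_descent (hd : ∀ k, 0 ≤ d k) (ha : Antitone a) (ha₀ : ∀ k, 0 ≤ a k)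
    (hM : 0 ≤ M) (hε : ∀ k, 1 ≤ k → 0 ≤ ε k)
    (hdescent : ∀ k, h (k + 1) ≤ M * ε (k + 1) + a (k + 1) * (d k - d (k + 1)))
    (hnear : ∀ k, 1 ≤ k → h (k + 1) ≤ h k + M * (ε (k + 1) + ε k)) (k : ℕ) (hk : 1 ≤ k) :
    h k ≤ 1 / k * (a 0 * d 0 + 2 * M * ∑ i ∈ Icc 1 k, i * ε i) := by
  have hpot := descent_potential_le hd ha hdescent hnear k
  have hk₀ : (0 : ℝ) < k := by exact_mod_cast hk
  rw [one_div_mul_eq_div, le_div_iff₀ hk₀]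
  linarith [mul_nonneg (ha₀ k) (hd k), mul_nonneg hM (mul_nonneg hk₀.le (hε k hk))]

end Descent

theorem mInner_sub_le_of_ipgm_step {n m : ℕ} {A : Matrix (Fin n) (Fin n) ℝ →ₗ[ℝ] Vec m}
    {Aadj : Vec m →ₗ[ℝ] Matrix (Fin n) (Fin n) ℝ}
    (hadj : ∀ (X : Matrix (Fin n) (Fin n) ℝ) (ξ : Vec m), ⟪A X, ξ⟫ = mInner X (Aadj ξ))
    {b ξ : Vec m} {C X Y S Z : Matrix (Fin n) (Fin n) ℝ} {σ ε δ M : ℝ} (hσ : 0 < σ)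
    (hdual : Aadj ξ + S - C = (1 / σ) • (X - Y)) (hcomp : mInner X S = 0)
    (hS : S.PosSemidef) (hZ : Z.PosSemidef) (hX : ‖A X - b‖ ≤ ε) (hZb : ‖A Z - b‖ ≤ δ)
    (hξ : ‖ξ‖ ≤ M) :
    mInner C X - mInner C Z ≤
      M * (ε + δ) + 1 / (2 * σ) * (mNorm (Y - Z) ^ 2 - mNorm (X - Z) ^ 2) := by
  have hstep := congrArg Matrix.toEuclideanVec hdual
  simp only [map_add, map_sub, map_smul] at hstep
  have hprox := inner_sub_le_of_proximal_step hσ hstep (by rwa [← mInner_eq_inner])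
    (by rw [← mInner_eq_inner]; exact mInner_nonneg_of_posSemidef hZ hS)
  have hres : mInner (Aadj ξ) (X - Z) ≤ M * (ε + δ) := by
    rw [mInner_eq_inner, real_inner_comm, ← mInner_eq_inner, ← hadj, map_sub]
    exact inner_sub_le_of_norm_sub_le hX hZb hξ
  simp only [← map_sub, ← mInner_eq_inner, ← mNorm_eq_norm, mInner_sub_right] at hprox hres
  linarith

theorem ipgm_objective_upper_bound_general {n m : ℕ}
    (A : Matrix (Fin n) (Fin n) ℝ →ₗ[ℝ] Vec m)
    (Aadj : Vec m →ₗ[ℝ] Matrix (Fin n) (Fin n) ℝ)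
    (hadj : ∀ (X : Matrix (Fin n) (Fin n) ℝ) (ξ : Vec m), ⟪A X, ξ⟫ = mInner X (Aadj ξ))
    (b : Vec m) (C : Matrix (Fin n) (Fin n) ℝ)
    (X : ℕ → Matrix (Fin n) (Fin n) ℝ) (y : ℕ → Vec m)
    (S : ℕ → Matrix (Fin n) (Fin n) ℝ)
    (σ : ℕ → ℝ) (ε : ℕ → ℝ)
    -- iPGM conditions
    (hXpsd : ∀ k, 1 ≤ k → (X k).PosSemidef)
    (hSpsd : ∀ k, 1 ≤ k → (S k).PosSemidef)
    (hσpos : ∀ k, 0 < σ k) (hσmono : Monotone σ)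
    (hfeas : ∀ k, 1 ≤ k → ‖A (X k) - b‖ ≤ ε k)
    (hdual : ∀ k, 1 ≤ k → Aadj (y k) + S k - C = (1 / σ k) • (X k - X (k - 1)))
    (hcomp : ∀ k, 1 ≤ k → mInner (X k) (S k) = 0)
    -- boundedness of the dual multipliers
    (M : ℝ) (hy : ∀ k, 1 ≤ k → ‖y k‖ ≤ M)
    -- a primal feasible point (in particular a primal optimal solution)
    (Xstar : Matrix (Fin n) (Fin n) ℝ) (hXstar : Xstar.PosSemidef)
    (hAXstar : A Xstar = b) :
    ∀ k, 1 ≤ k →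
      mInner C (X k - Xstar) ≤
        (1 / (k : ℝ)) * ((1 / (2 * σ 0)) * mNorm (X 0 - Xstar) ^ 2
          + 2 * M * ∑ i ∈ Finset.Icc 1 k, (i : ℝ) * ε i) := by
  have step : ∀ k Z δ, Z.PosSemidef → ‖A Z - b‖ ≤ δ →
      mInner C (X (k + 1)) - mInner C Z ≤ M * (ε (k + 1) + δ)
        + 1 / (2 * σ (k + 1)) * (mNorm (X k - Z) ^ 2 - mNorm (X (k + 1) - Z) ^ 2) :=
    fun k _ _ hZ hδ => mInner_sub_le_of_ipgm_step hadj (hσpos _) (hdual _ k.succ_pos)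
      (hcomp _ k.succ_pos) (hSpsd _ k.succ_pos) hZ (hfeas _ k.succ_pos) hδ (hy _ k.succ_pos)
  have hM : 0 ≤ M := (norm_nonneg _).trans (hy 1 le_rfl)
  have hε : ∀ k, 1 ≤ k → 0 ≤ ε k := fun k hk => (norm_nonneg _).trans (hfeas k hk)
  have ha : Antitone fun k => 1 / (2 * σ k) := fun i j hij => by
    have := hσpos i
    exact one_div_le_one_div_of_le (by positivity) (by linarith [hσmono hij])
  intro k hk
  rw [mInner_sub_right]
  refine le_one_div_mul_of_descent (h := fun k => mInner C (X k) - mInner C Xstar)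
    (fun _ => sq_nonneg (mNorm (_ - Xstar))) ha (fun k => by have := hσpos k; positivity) hM hε
    (fun k => ?_) (fun k hk => ?_) k hk
  · simpa [hAXstar] using step k Xstar 0 hXstar (by simp [hAXstar])
  · have hstep := step k (X k) (ε k) (hXpsd k hk) (hfeas k hk)
    have hdrop : 0 ≤ 1 / (2 * σ (k + 1)) * mNorm (X (k + 1) - X k) ^ 2 := by
      have := hσpos (k + 1)
      positivity
    rw [sub_self, show mNorm 0 = 0 by simp [mNorm, mInner]] at hstep
    linarith

/-- objective upper bound for the inexact projected gradient method (iPGM). -/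
theorem ipgm_objective_upper_bound {n m : ℕ}
    (A : Matrix (Fin n) (Fin n) ℝ →ₗ[ℝ] Vec m)
    (Aadj : Vec m →ₗ[ℝ] Matrix (Fin n) (Fin n) ℝ)
    (hadj : ∀ (X : Matrix (Fin n) (Fin n) ℝ) (ξ : Vec m), ⟪A X, ξ⟫ = mInner X (Aadj ξ))
    (b : Vec m) (C : Matrix (Fin n) (Fin n) ℝ) (hC : C.IsSymm)
    (X : ℕ → Matrix (Fin n) (Fin n) ℝ) (y : ℕ → Vec m)
    (S : ℕ → Matrix (Fin n) (Fin n) ℝ)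
    (σ : ℕ → ℝ) (ε : ℕ → ℝ)
    -- iPGM conditions
    (hX0 : (X 0).PosSemidef)
    (hXpsd : ∀ k, 1 ≤ k → (X k).PosSemidef)
    (hSpsd : ∀ k, 1 ≤ k → (S k).PosSemidef)
    (hσpos : ∀ k, 0 < σ k) (hσmono : Monotone σ)
    (hεnonneg : ∀ k, 0 ≤ ε k)
    (hfeas : ∀ k, 1 ≤ k → ‖A (X k) - b‖ ≤ ε k)
    (hdual : ∀ k, 1 ≤ k → Aadj (y k) + S k - C = (1 / σ k) • (X k - X (k - 1)))
    (hcomp : ∀ k, 1 ≤ k → mInner (X k) (S k) = 0)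
    -- boundedness of the dual multipliers
    (M : ℝ) (hM : 0 < M) (hy : ∀ k, 1 ≤ k → ‖y k‖ ≤ M)
    -- a primal feasible point (in particular a primal optimal solution)
    (Xstar : Matrix (Fin n) (Fin n) ℝ) (hXstar : Xstar.PosSemidef)
    (hAXstar : A Xstar = b) :
    ∀ k, 1 ≤ k →
      mInner C (X k - Xstar) ≤
        (1 / (k : ℝ)) * ((1 / (2 * σ 0)) * mNorm (X 0 - Xstar) ^ 2
          + 2 * M * ∑ i ∈ Finset.Icc 1 k, (i : ℝ) * ε i) :=
  ipgm_objective_upper_bound_general A Aadj hadj b C X y S σ ε hXpsd hSpsd hσpos hσmono hfeas hdual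
    hcomp M hy Xstar hXstar hAXstar
end
end

section
/- (sGS decomposition theorem.) Let A : S^n → R^m be a surjective linear map, Z ∈ S^n, b ∈ R^m, and define f(W, ξ) = ½‖W + A*ξ + Z‖² − ⟨b, ξ⟩ on S^n × R^m. Fix W̃ ∈ S^n and define q(W, ξ) = f(W, ξ) + ½⟨A(W − W̃), (AA*)^{−1} A(W − W̃)⟩. Set ξ† = (AA*)^{−1}( b − A(Z) − A(W̃) ), W⁺ = Π_{S^n_+}( −A*ξ† − Z ), and ξ⁺ = (AA*)^{−1}( b − A(Z) − A(W⁺) ). Then (W⁺, ξ⁺) is the unique minimizer of q(W, ξ) over all (W, ξ) with W ⪰ 0 and ξ ∈ R^m; moreover ξ† minimizes ξ ↦ f(W̃, ξ), W⁺ minimizes W ↦ f(W, ξ†) over W ⪰ 0, and ξ⁺ minimizes ξ ↦ f(W⁺, ξ). -/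
set_option autoImplicit false

open Matrix Finset Filter
open scoped RealInnerProductSpace

noncomputable section

/-- `P` is the (unique) nearest positive semidefinite matrix to `Z` in the Frobenius norm,
i.e. the projection of `Z` onto the PSD cone. -/
def IsProjPSD {n : ℕ} (Z P : Matrix (Fin n) (Fin n) ℝ) : Prop :=
  P.PosSemidef ∧
    ∀ Y : Matrix (Fin n) (Fin n) ℝ, Y.PosSemidef → mNorm (P - Z) ≤ mNorm (Y - Z)


/-! Completing the square in `ξ` gives `f(W, ξ) = f(W, ξ*(W)) + ½‖A*(ξ - ξ*(W))‖²`, where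
`ξ*(W) = (AA*)⁻¹(b - A Z - A W)` is the minimizer of `f(W, ·)`. Applied at `ξ` and at
`ξ† = ξ*(W̃)`, and using `ξ† - ξ*(W) = (AA*)⁻¹ A (W - W̃)`, it shows that the proximal term is exactly
what makes `q(W, ξ) = f(W, ξ†) + ½‖A*(ξ - ξ*(W))‖²`. Now `f(W, ξ†)` is, up to a constant,
`½‖W - (-A*ξ† - Z)‖²`, and the obtuse-angle property of the projection onto the convex PSD cone gives
`q(W, ξ) ≥ q(W⁺, ξ⁺) + ½‖W - W⁺‖² + ½‖A*(ξ - ξ*(W))‖²`, hence minimality and uniqueness at once. -/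

theorem Convex.norm_sub_sq_add_norm_sub_sq_le {E : Type*} [NormedAddCommGroup E]
    [InnerProductSpace ℝ E] {K : Set E} (hK : Convex ℝ K) {z P : E} (hPK : P ∈ K)
    (hP : IsMinOn (fun y => ‖y - z‖) K P) {y : E} (hy : y ∈ K) :
    ‖P - z‖ ^ 2 + ‖y - P‖ ^ 2 ≤ ‖y - z‖ ^ 2 := by
  have : Nonempty K := ⟨⟨P, hPK⟩⟩
  have hinf : ‖z - P‖ = ⨅ w : K, ‖z - w‖ :=
    le_antisymm
      (le_ciInf fun w => by simpa only [norm_sub_rev z] using isMinOn_iff.1 hP w w.2)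
      (ciInf_le (f := fun w : K => ‖z - w‖)
        ⟨0, Set.forall_mem_range.2 fun _ => norm_nonneg _⟩ ⟨P, hPK⟩)
  have hobtuse := (norm_eq_iInf_iff_real_inner_le_zero hK hPK).1 hinf y hy
  have hsplit : y - z = (y - P) - (z - P) := by abel
  rw [hsplit, norm_sub_sq_real (y - P), real_inner_comm, norm_sub_rev P z]
  linarith

namespace Matrix

theorem convex_posSemidef {ι : Type*} [Fintype ι] :
    Convex ℝ {M : Matrix ι ι ℝ | M.PosSemidef} :=
  fun _ hX _ hY _ _ ha hb _ => (hX.smul ha).add (hY.smul hb)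

variable {ι : Type*} [Fintype ι] [DecidableEq ι]

-- Mathlib's inner product `⟪X, Y⟫ = trace (Y M Xᴴ)` induced by the weight `M = 1`.
abbrev frobeniusTraceNormedAddCommGroup : NormedAddCommGroup (Matrix ι ι ℝ) :=
  toMatrixNormedAddCommGroup 1 PosDef.one

abbrev frobeniusTraceInnerProductSpace :
    letI := frobeniusTraceNormedAddCommGroup (ι := ι)
    InnerProductSpace ℝ (Matrix ι ι ℝ) :=
  toMatrixInnerProductSpace 1 PosDef.one.posSemidef

attribute [local instance] frobeniusTraceNormedAddCommGroup frobeniusTraceInnerProductSpace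

theorem frobeniusTrace_inner_eq (X Y : Matrix ι ι ℝ) : ⟪X, Y⟫ = (Xᵀ * Y).trace := by
  change (Y * 1 * Xᴴ).trace = _
  rw [mul_one, trace_mul_comm, conjTranspose_eq_transpose_of_trivial]

theorem frobeniusTrace_norm_eq (X : Matrix ι ι ℝ) : ‖X‖ = √((Xᵀ * X).trace) := by
  rw [norm_eq_sqrt_real_inner, frobeniusTrace_inner_eq]

end Matrix

namespace SGS

variable {E F : Type*} [NormedAddCommGroup E] [InnerProductSpace ℝ E]
  [NormedAddCommGroup F] [InnerProductSpace ℝ F]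
  (A : E →ₗ[ℝ] F) (Aadj : F →ₗ[ℝ] E) (B : F →ₗ[ℝ] F) (Z : E) (b : F)

def objective (W : E) (ξ : F) : ℝ := 1 / 2 * ‖W + Aadj ξ + Z‖ ^ 2 - ⟪b, ξ⟫

def proxObjective (Wt W : E) (ξ : F) : ℝ :=
  objective Aadj Z b W ξ + 1 / 2 * ⟪A (W - Wt), B (A (W - Wt))⟫

def dualUpdate (W : E) : F := B (b - A Z - A W)

variable {A Aadj B Z b}

theorem apply_add_adjoint_dualUpdate (hB : ∀ ξ, A (Aadj (B ξ)) = ξ) (W : E) :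
    A (W + Aadj (dualUpdate A B Z b W) + Z) = b := by
  simp only [dualUpdate, map_add, hB]
  abel

theorem objective_eq_dualUpdate_add (hadj : ∀ x ξ, ⟪A x, ξ⟫ = ⟪x, Aadj ξ⟫)
    (hB : ∀ ξ, A (Aadj (B ξ)) = ξ) (W : E) (ξ : F) :
    objective Aadj Z b W ξ = objective Aadj Z b W (dualUpdate A B Z b W)
      + 1 / 2 * ‖Aadj (ξ - dualUpdate A B Z b W)‖ ^ 2 := by
  set ξ₀ := dualUpdate A B Z b W
  have hsplit : W + Aadj ξ + Z = (W + Aadj ξ₀ + Z) + Aadj (ξ - ξ₀) := by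
    rw [map_sub]
    abel
  have hcross : ⟪W + Aadj ξ₀ + Z, Aadj (ξ - ξ₀)⟫ = ⟪b, ξ - ξ₀⟫ := by
    rw [← hadj, apply_add_adjoint_dualUpdate hB]
  rw [objective, objective, hsplit, norm_add_sq_real, hcross, inner_sub_right]
  ring

theorem objective_dualUpdate_le (hadj : ∀ x ξ, ⟪A x, ξ⟫ = ⟪x, Aadj ξ⟫)
    (hB : ∀ ξ, A (Aadj (B ξ)) = ξ) (W : E) (ξ : F) :
    objective Aadj Z b W (dualUpdate A B Z b W) ≤ objective Aadj Z b W ξ := by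
  rw [objective_eq_dualUpdate_add hadj hB W ξ]
  exact le_add_of_nonneg_right (by positivity)

theorem norm_adjoint_sq (hadj : ∀ x ξ, ⟪A x, ξ⟫ = ⟪x, Aadj ξ⟫)
    (hB : ∀ ξ, A (Aadj (B ξ)) = ξ) (η : F) :
    ‖Aadj (B η)‖ ^ 2 = ⟪η, B η⟫ := by
  rw [← real_inner_self_eq_norm_sq, ← hadj, hB]

theorem dualUpdate_sub_dualUpdate (Wt W : E) :
    dualUpdate A B Z b Wt - dualUpdate A B Z b W = B (A (W - Wt)) := by
  simp only [dualUpdate, map_sub]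
  abel

theorem proxObjective_eq (hadj : ∀ x ξ, ⟪A x, ξ⟫ = ⟪x, Aadj ξ⟫)
    (hB : ∀ ξ, A (Aadj (B ξ)) = ξ) (Wt W : E) (ξ : F) :
    proxObjective A Aadj B Z b Wt W ξ = objective Aadj Z b W (dualUpdate A B Z b Wt)
      + 1 / 2 * ‖Aadj (ξ - dualUpdate A B Z b W)‖ ^ 2 := by
  have hξ := objective_eq_dualUpdate_add (Z := Z) (b := b) hadj hB W ξ
  have hξdag := objective_eq_dualUpdate_add (Z := Z) (b := b) hadj hB W (dualUpdate A B Z b Wt)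
  rw [dualUpdate_sub_dualUpdate, norm_adjoint_sq hadj hB] at hξdag
  rw [proxObjective]
  linarith

theorem objective_add_half_norm_sub_sq_le {K : Set E} (hK : Convex ℝ K) {ξ : F} {P : E}
    (hPK : P ∈ K) (hP : IsMinOn (fun y => ‖y - (-Aadj ξ - Z)‖) K P) {W : E} (hW : W ∈ K) :
    objective Aadj Z b P ξ + 1 / 2 * ‖W - P‖ ^ 2 ≤ objective Aadj Z b W ξ := by
  have h := hK.norm_sub_sq_add_norm_sub_sq_le hPK hP hW
  have hshift : ∀ V : E, V - (-Aadj ξ - Z) = V + Aadj ξ + Z := fun V => by abel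
  rw [hshift, hshift] at h
  rw [objective, objective]
  linarith

theorem objective_le_of_isMinOn {K : Set E} (hK : Convex ℝ K) {ξ : F} {P : E}
    (hPK : P ∈ K) (hP : IsMinOn (fun y => ‖y - (-Aadj ξ - Z)‖) K P) {W : E} (hW : W ∈ K) :
    objective Aadj Z b P ξ ≤ objective Aadj Z b W ξ := by
  have := objective_add_half_norm_sub_sq_le (b := b) hK hPK hP hW
  linarith [sq_nonneg ‖W - P‖]

section Projection

variable {K : Set E} {Wt P : E}

theorem proxObjective_add_le (hadj : ∀ x ξ, ⟪A x, ξ⟫ = ⟪x, Aadj ξ⟫)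
    (hB : ∀ ξ, A (Aadj (B ξ)) = ξ) (hK : Convex ℝ K) (hPK : P ∈ K)
    (hP : IsMinOn (fun y => ‖y - (-Aadj (dualUpdate A B Z b Wt) - Z)‖) K P)
    {W : E} (hW : W ∈ K) (ξ : F) :
    proxObjective A Aadj B Z b Wt P (dualUpdate A B Z b P) + 1 / 2 * ‖W - P‖ ^ 2
      + 1 / 2 * ‖Aadj (ξ - dualUpdate A B Z b W)‖ ^ 2
      ≤ proxObjective A Aadj B Z b Wt W ξ := by
  rw [proxObjective_eq hadj hB, proxObjective_eq hadj hB, sub_self, map_zero, norm_zero]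
  have := objective_add_half_norm_sub_sq_le (b := b) hK hPK hP hW
  linarith

theorem proxObjective_le (hadj : ∀ x ξ, ⟪A x, ξ⟫ = ⟪x, Aadj ξ⟫)
    (hB : ∀ ξ, A (Aadj (B ξ)) = ξ) (hK : Convex ℝ K) (hPK : P ∈ K)
    (hP : IsMinOn (fun y => ‖y - (-Aadj (dualUpdate A B Z b Wt) - Z)‖) K P)
    {W : E} (hW : W ∈ K) (ξ : F) :
    proxObjective A Aadj B Z b Wt P (dualUpdate A B Z b P)
      ≤ proxObjective A Aadj B Z b Wt W ξ := by
  have := proxObjective_add_le hadj hB hK hPK hP hW ξ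
  linarith [sq_nonneg ‖W - P‖, sq_nonneg ‖Aadj (ξ - dualUpdate A B Z b W)‖]

theorem eq_of_proxObjective_eq (hadj : ∀ x ξ, ⟪A x, ξ⟫ = ⟪x, Aadj ξ⟫)
    (hB : ∀ ξ, A (Aadj (B ξ)) = ξ) (hB' : ∀ ξ, B (A (Aadj ξ)) = ξ) (hK : Convex ℝ K)
    (hPK : P ∈ K) (hP : IsMinOn (fun y => ‖y - (-Aadj (dualUpdate A B Z b Wt) - Z)‖) K P)
    {W : E} (hW : W ∈ K) {ξ : F}
    (heq : proxObjective A Aadj B Z b Wt W ξ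
      = proxObjective A Aadj B Z b Wt P (dualUpdate A B Z b P)) :
    W = P ∧ ξ = dualUpdate A B Z b P := by
  have h := proxObjective_add_le hadj hB hK hPK hP hW ξ
  have hWP : ‖W - P‖ ^ 2 = 0 := by
    linarith [sq_nonneg ‖W - P‖, sq_nonneg ‖Aadj (ξ - dualUpdate A B Z b W)‖]
  have hξ : ‖Aadj (ξ - dualUpdate A B Z b W)‖ ^ 2 = 0 := by
    linarith [sq_nonneg ‖W - P‖, sq_nonneg ‖Aadj (ξ - dualUpdate A B Z b W)‖]
  obtain rfl : W = P := by simpa [sub_eq_zero] using hWP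
  refine ⟨rfl, sub_eq_zero.1 ?_⟩
  rw [← hB' (ξ - _), (by simpa using hξ : Aadj (ξ - dualUpdate A B Z b W) = 0), map_zero, map_zero]

end Projection

end SGS

theorem sGS_decomposition_general {n m : ℕ}
    (A : Matrix (Fin n) (Fin n) ℝ →ₗ[ℝ] Vec m)
    (Aadj : Vec m →ₗ[ℝ] Matrix (Fin n) (Fin n) ℝ)
    (hadj : ∀ (X : Matrix (Fin n) (Fin n) ℝ) (ξ : Vec m), ⟪A X, ξ⟫ = mInner X (Aadj ξ))
    -- `B` is the inverse of `A A*`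
    (B : Vec m →ₗ[ℝ] Vec m)
    (hB1 : ∀ ξ : Vec m, A (Aadj (B ξ)) = ξ)
    (hB2 : ∀ ξ : Vec m, B (A (Aadj ξ)) = ξ)
    -- the projection onto the PSD cone
    (proj : Matrix (Fin n) (Fin n) ℝ → Matrix (Fin n) (Fin n) ℝ)
    (hproj : ∀ Y : Matrix (Fin n) (Fin n) ℝ, IsProjPSD Y (proj Y))
    (Z : Matrix (Fin n) (Fin n) ℝ) (b : Vec m)
    (Wt : Matrix (Fin n) (Fin n) ℝ) :
    let f : Matrix (Fin n) (Fin n) ℝ → Vec m → ℝ :=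
      fun W ξ => (1 / 2) * mNorm (W + Aadj ξ + Z) ^ 2 - ⟪b, ξ⟫
    let q : Matrix (Fin n) (Fin n) ℝ → Vec m → ℝ :=
      fun W ξ => f W ξ + (1 / 2) * ⟪A (W - Wt), B (A (W - Wt))⟫
    let ξdag : Vec m := B (b - A Z - A Wt)
    let Wplus : Matrix (Fin n) (Fin n) ℝ := proj (-(Aadj ξdag) - Z)
    let ξplus : Vec m := B (b - A Z - A Wplus)
    -- (W⁺, ξ⁺) is the unique minimizer of q over PSD W and arbitrary ξ
    (∀ (W : Matrix (Fin n) (Fin n) ℝ) (ξ : Vec m), W.PosSemidef →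
        q Wplus ξplus ≤ q W ξ) ∧
    (∀ (W : Matrix (Fin n) (Fin n) ℝ) (ξ : Vec m), W.PosSemidef →
        q W ξ = q Wplus ξplus → W = Wplus ∧ ξ = ξplus) ∧
    -- ξ† minimizes f(W̃, ·)
    (∀ ξ : Vec m, f Wt ξdag ≤ f Wt ξ) ∧
    -- W⁺ minimizes f(·, ξ†) over PSD matrices
    (∀ W : Matrix (Fin n) (Fin n) ℝ, W.PosSemidef → f Wplus ξdag ≤ f W ξdag) ∧
    -- ξ⁺ minimizes f(W⁺, ·)
    (∀ ξ : Vec m, f Wplus ξplus ≤ f Wplus ξ) := by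
  intro f q ξdag Wplus ξplus
  let := Matrix.frobeniusTraceNormedAddCommGroup (ι := Fin n)
  let := Matrix.frobeniusTraceInnerProductSpace (ι := Fin n)
  have hadj' : ∀ X ξ, ⟪A X, ξ⟫ = ⟪X, Aadj ξ⟫ := fun X ξ => by
    rw [hadj, Matrix.frobeniusTrace_inner_eq, mInner]
  have hf : f = SGS.objective Aadj Z b := by
    funext W ξ
    simp only [f, SGS.objective, Matrix.frobeniusTrace_norm_eq, mNorm, mInner]
  have hq : q = SGS.proxObjective A Aadj B Z b Wt := by
    funext W ξ
    simp only [q, SGS.proxObjective, hf]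
  have hK := Matrix.convex_posSemidef (ι := Fin n)
  have hPK : Wplus ∈ {M : Matrix (Fin n) (Fin n) ℝ | M.PosSemidef} := (hproj _).1
  have hP : IsMinOn (fun Y => ‖Y - (-Aadj ξdag - Z)‖) {M | M.PosSemidef} Wplus :=
    isMinOn_iff.2 fun Y hY => by
      simpa only [Matrix.frobeniusTrace_norm_eq, mNorm, mInner] using (hproj _).2 Y hY
  rw [hq, hf]
  exact ⟨fun W ξ hW => SGS.proxObjective_le hadj' hB1 hK hPK hP hW ξ,
    fun W ξ hW heq => SGS.eq_of_proxObjective_eq hadj' hB1 hB2 hK hPK hP hW heq,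
    SGS.objective_dualUpdate_le hadj' hB1 Wt,
    fun W hW => SGS.objective_le_of_isMinOn hK hPK hP hW,
    SGS.objective_dualUpdate_le hadj' hB1 Wplus⟩

/-- the sGS decomposition theorem — the sGS proximal subproblem is solved
exactly by one backward and one forward Gauss–Seidel sweep. -/
theorem sGS_decomposition {n m : ℕ}
    (A : Matrix (Fin n) (Fin n) ℝ →ₗ[ℝ] Vec m)
    (Aadj : Vec m →ₗ[ℝ] Matrix (Fin n) (Fin n) ℝ)
    (hadj : ∀ (X : Matrix (Fin n) (Fin n) ℝ) (ξ : Vec m), ⟪A X, ξ⟫ = mInner X (Aadj ξ))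
    (hAadjSymm : ∀ ξ : Vec m, (Aadj ξ).IsSymm)
    (hsurj : Function.Surjective ⇑A)
    -- `B` is the inverse of `A A*`
    (B : Vec m →ₗ[ℝ] Vec m)
    (hB1 : ∀ ξ : Vec m, A (Aadj (B ξ)) = ξ)
    (hB2 : ∀ ξ : Vec m, B (A (Aadj ξ)) = ξ)
    -- the projection onto the PSD cone
    (proj : Matrix (Fin n) (Fin n) ℝ → Matrix (Fin n) (Fin n) ℝ)
    (hproj : ∀ Y : Matrix (Fin n) (Fin n) ℝ, IsProjPSD Y (proj Y))
    (Z : Matrix (Fin n) (Fin n) ℝ) (hZ : Z.IsSymm) (b : Vec m)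
    (Wt : Matrix (Fin n) (Fin n) ℝ) (hWt : Wt.IsSymm) :
    let f : Matrix (Fin n) (Fin n) ℝ → Vec m → ℝ :=
      fun W ξ => (1 / 2) * mNorm (W + Aadj ξ + Z) ^ 2 - ⟪b, ξ⟫
    let q : Matrix (Fin n) (Fin n) ℝ → Vec m → ℝ :=
      fun W ξ => f W ξ + (1 / 2) * ⟪A (W - Wt), B (A (W - Wt))⟫
    let ξdag : Vec m := B (b - A Z - A Wt)
    let Wplus : Matrix (Fin n) (Fin n) ℝ := proj (-(Aadj ξdag) - Z)
    let ξplus : Vec m := B (b - A Z - A Wplus)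
    -- (W⁺, ξ⁺) is the unique minimizer of q over PSD W and arbitrary ξ
    (∀ (W : Matrix (Fin n) (Fin n) ℝ) (ξ : Vec m), W.PosSemidef →
        q Wplus ξplus ≤ q W ξ) ∧
    (∀ (W : Matrix (Fin n) (Fin n) ℝ) (ξ : Vec m), W.PosSemidef →
        q W ξ = q Wplus ξplus → W = Wplus ∧ ξ = ξplus) ∧
    -- ξ† minimizes f(W̃, ·)
    (∀ ξ : Vec m, f Wt ξdag ≤ f Wt ξ) ∧
    -- W⁺ minimizes f(·, ξ†) over PSD matrices
    (∀ W : Matrix (Fin n) (Fin n) ℝ, W.PosSemidef → f Wplus ξdag ≤ f W ξdag) ∧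
    -- ξ⁺ minimizes f(W⁺, ·)
    (∀ ξ : Vec m, f Wplus ξplus ≤ f Wplus ξ) :=
  sGS_decomposition_general A Aadj hadj B hB1 hB2 proj hproj Z b Wt
end
end

section
/- Let A : S^n → R^m be a linear map with adjoint A*, Z ∈ S^n, b ∈ R^m, and define φ : R^m → R by φ(ξ) = ½‖Π_{S^n_+}(A*ξ + Z)‖² − ⟨b, ξ⟩. Then φ is convex and differentiable on R^m, with gradient ∇φ(ξ) = A( Π_{S^n_+}(A*ξ + Z) ) − b for every ξ ∈ R^m. -/
set_option autoImplicit false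

open Matrix Finset Filter
open scoped RealInnerProductSpace

noncomputable section

/-! For the metric projection `p` onto a convex cone, the residual `y - p y` is orthogonal to
`p y` and has nonpositive inner product with every element of the cone. From this,
`ψ y = ½‖p y‖²` satisfies the subgradient inequality `ψ y + ⟪p y, w - y⟫ ≤ ψ w`, and since `p` is
nonexpansive the gap `ψ w - ψ y - ⟪p y, w - y⟫` is also at most `‖w - y‖²`. Hence `ψ` is convex
and differentiable with gradient `p`. Flattening matrices into `ℝ^(n×n)` turns the trace inner
product into the Euclidean one and the PSD cone into a convex cone, and
`φ ξ = ψ (A* ξ + Z) - ⟪b, ξ⟫` then inherits convexity, while the chain rule together with the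
adjoint relation gives `∇φ ξ = A (p (A* ξ + Z)) - b`. -/

section InnerProductSpace

variable {E F : Type*} [NormedAddCommGroup E] [InnerProductSpace ℝ E]
  [NormedAddCommGroup F] [InnerProductSpace ℝ F]

theorem convexOn_univ_of_forall_add_inner_le {f : E → ℝ} {g : E → E}
    (h : ∀ x y, f x + ⟪g x, y - x⟫ ≤ f y) : ConvexOn ℝ Set.univ f := by
  refine ⟨convex_univ, fun x _ y _ a c ha hc hac => ?_⟩
  set z := a • x + c • y
  have hinner : a * ⟪g z, x - z⟫ + c * ⟪g z, y - z⟫ = 0 := by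
    rw [← real_inner_smul_right, ← real_inner_smul_right, ← inner_add_right, smul_sub, smul_sub,
      sub_add_sub_comm, ← add_smul, hac, one_smul, sub_self, inner_zero_right]
  calc f z = a * (f z + ⟪g z, x - z⟫) + c * (f z + ⟪g z, y - z⟫) := by
        linear_combination (-f z) * hac - hinner
    _ ≤ a • f x + c • f y :=
        add_le_add (mul_le_mul_of_nonneg_left (h z x) ha) (mul_le_mul_of_nonneg_left (h z y) hc)

theorem hasGradientAt_of_abs_sub_inner_le_sq [CompleteSpace E] {f : E → ℝ} {g x : E} (C : ℝ)
    (h : ∀ y, |f y - f x - ⟪g, y - x⟫| ≤ C * ‖y - x‖ ^ 2) : HasGradientAt f g x := by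
  rw [hasGradientAt_iff_isLittleO]
  refine Asymptotics.IsBigO.trans_isLittleO ?_ (Asymptotics.isLittleO_pow_sub_sub x one_lt_two)
  refine Asymptotics.IsBigO.of_bound C (Filter.Eventually.of_forall fun y => ?_)
  simpa [Real.norm_eq_abs, abs_of_nonneg (sq_nonneg ‖y - x‖)] using h y

theorem hasGradientAt_comp_add_sub_inner [CompleteSpace E] [CompleteSpace F] {f : E → ℝ}
    {g : E} (T : F →L[ℝ] E) (c : E) (b g' : F) (hg' : ∀ v, ⟪g, T v⟫ = ⟪g', v⟫) {ξ : F}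
    (hf : HasGradientAt f g (T ξ + c)) :
    HasGradientAt (fun ζ => f (T ζ + c) - ⟪b, ζ⟫) (g' - b) ξ := by
  rw [hasGradientAt_iff_hasFDerivAt] at hf ⊢
  refine ((hf.comp ξ (T.hasFDerivAt.add_const c)).sub (innerSL ℝ b).hasFDerivAt).congr_fderiv ?_
  ext v
  simp [hg']

theorem ConvexOn.comp_add_sub_inner {f : E → ℝ} (hf : ConvexOn ℝ Set.univ f) (T : F →ₗ[ℝ] E)
    (c : E) (b : F) : ConvexOn ℝ Set.univ (fun ζ => f (T ζ + c) - ⟪b, ζ⟫) :=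
  (hf.comp_affineMap (T.toAffineMap + AffineMap.const ℝ F c)).sub
    ((innerₛₗ ℝ b).concaveOn convex_univ)


def IsMetricProjection (K : Set E) (p : E → E) : Prop :=
  ∀ y, p y ∈ K ∧ ∀ k ∈ K, ‖p y - y‖ ≤ ‖k - y‖

namespace IsMetricProjection

variable {p : E → E}

theorem inner_sub_sub_nonpos {K : Set E} (hK : Convex ℝ K) (hp : IsMetricProjection K p)
    (y : E) {k : E} (hk : k ∈ K) : ⟪y - p y, k - p y⟫ ≤ 0 := by
  obtain ⟨hpy, hmin⟩ := hp y
  have : Nonempty K := ⟨⟨p y, hpy⟩⟩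
  refine (norm_eq_iInf_iff_real_inner_le_zero hK hpy).mp (le_antisymm ?_ ?_) k hk
  · exact le_ciInf fun w => by simpa only [norm_sub_rev y] using hmin w w.2
  · exact ciInf_le ⟨0, Set.forall_mem_range.2 fun _ => norm_nonneg _⟩ (⟨p y, hpy⟩ : K)

theorem norm_sub_sq_le_inner {K : Set E} (hK : Convex ℝ K) (hp : IsMetricProjection K p)
    (y w : E) : ‖p w - p y‖ ^ 2 ≤ ⟪w - y, p w - p y⟫ := by
  have hy := hp.inner_sub_sub_nonpos hK y (hp w).1
  have hw := hp.inner_sub_sub_nonpos hK w (hp y).1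
  rw [← real_inner_self_eq_norm_sq]
  simp only [inner_sub_left, inner_sub_right, real_inner_comm (p y) (p w)] at hy hw ⊢
  linarith

theorem norm_sub_le {K : Set E} (hK : Convex ℝ K) (hp : IsMetricProjection K p) (y w : E) :
    ‖p w - p y‖ ≤ ‖w - y‖ := by
  have h := (hp.norm_sub_sq_le_inner hK y w).trans (real_inner_le_norm _ _)
  rw [sq] at h
  nlinarith [norm_nonneg (p w - p y), norm_nonneg (w - y)]

variable {K : ConvexCone ℝ E}

theorem inner_sub_self_eq_zero (hp : IsMetricProjection K p) (y : E) : ⟪y - p y, p y⟫ = 0 := by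
  -- test the variational inequality against `p y / 2` and `2 • p y`, both in the cone
  have hhalf := hp.inner_sub_sub_nonpos K.convex y (K.smul_mem (one_half_pos (α := ℝ)) (hp y).1)
  have htwice := hp.inner_sub_sub_nonpos K.convex y (K.add_mem (hp y).1 (hp y).1)
  rw [add_sub_cancel_right] at htwice
  rw [show (1 / 2 : ℝ) • p y - p y = (-1 / 2 : ℝ) • p y by module, real_inner_smul_right] at hhalf
  linarith

theorem inner_sub_nonpos (hp : IsMetricProjection K p) (y : E) {k : E} (hk : k ∈ K) :
    ⟪y - p y, k⟫ ≤ 0 := by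
  simpa using hp.inner_sub_sub_nonpos K.convex y (K.add_mem hk (hp y).1)

theorem half_sq_norm_add_inner_le (hp : IsMetricProjection K p) (y w : E) :
    1 / 2 * ‖p y‖ ^ 2 + ⟪p y, w - y⟫ ≤ 1 / 2 * ‖p w‖ ^ 2 := by
  have hy := hp.inner_sub_self_eq_zero y
  have hw := hp.inner_sub_nonpos w (hp y).1
  have hsq : 0 ≤ ‖p w - p y‖ ^ 2 := sq_nonneg _
  rw [norm_sub_sq_real] at hsq
  simp only [inner_sub_right, real_inner_self_eq_norm_sq, real_inner_comm (p y)] at hy hw hsq ⊢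
  linarith

theorem convexOn_half_sq_norm (hp : IsMetricProjection K p) :
    ConvexOn ℝ Set.univ fun y => 1 / 2 * ‖p y‖ ^ 2 :=
  convexOn_univ_of_forall_add_inner_le hp.half_sq_norm_add_inner_le

theorem hasGradientAt_half_sq_norm [CompleteSpace E] (hp : IsMetricProjection K p) (y : E) :
    HasGradientAt (fun y => 1 / 2 * ‖p y‖ ^ 2) (p y) y := by
  refine hasGradientAt_of_abs_sub_inner_le_sq 1 fun w => abs_le.2 ⟨?_, ?_⟩
  · have := hp.half_sq_norm_add_inner_le y w
    nlinarith [sq_nonneg ‖w - y‖]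
  · have hwy := hp.half_sq_norm_add_inner_le w y
    have hcs : ⟪p w - p y, w - y⟫ ≤ ‖w - y‖ ^ 2 := calc
      ⟪p w - p y, w - y⟫ ≤ ‖p w - p y‖ * ‖w - y‖ := real_inner_le_norm _ _
      _ ≤ ‖w - y‖ * ‖w - y‖ := by gcongr; exact hp.norm_sub_le K.convex y w
      _ = ‖w - y‖ ^ 2 := (sq _).symm
    rw [show y - w = -(w - y) by abel, inner_neg_right] at hwy
    rw [inner_sub_left] at hcs
    linarith

end IsMetricProjection

end InnerProductSpace

def matrixToEuclidean {ι κ : Type*} : Matrix ι κ ℝ ≃ₗ[ℝ] EuclideanSpace ℝ (ι × κ) where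
  toFun X := WithLp.toLp 2 fun ij => X ij.1 ij.2
  invFun v := Matrix.of fun i j => v (i, j)
  map_add' _ _ := rfl
  map_smul' _ _ := rfl
  left_inv _ := rfl
  right_inv _ := rfl

theorem inner_matrixToEuclidean {n : ℕ} (X Y : Matrix (Fin n) (Fin n) ℝ) :
    ⟪matrixToEuclidean X, matrixToEuclidean Y⟫ = mInner X Y := by
  simp only [mInner, PiLp.inner_apply, RCLike.inner_apply, conj_trivial, Fintype.sum_prod_type,
    Matrix.trace, Matrix.diag, Matrix.mul_apply, Matrix.transpose_apply, mul_comm]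
  exact Finset.sum_comm

theorem mNorm_eq_norm_matrixToEuclidean {n : ℕ} (X : Matrix (Fin n) (Fin n) ℝ) :
    mNorm X = ‖matrixToEuclidean X‖ := by
  rw [mNorm, ← inner_matrixToEuclidean, real_inner_self_eq_norm_sq, Real.sqrt_sq (norm_nonneg _)]

def psdCone (n : ℕ) : ConvexCone ℝ (EuclideanSpace ℝ (Fin n × Fin n)) where
  carrier := {v | (matrixToEuclidean.symm v).PosSemidef}
  smul_mem' c hc v hv := by simpa using hv.smul hc.le
  add_mem' v hv w hw := by simpa using hv.add hw

theorem isMetricProjection_psdCone {n : ℕ}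
    {proj : Matrix (Fin n) (Fin n) ℝ → Matrix (Fin n) (Fin n) ℝ}
    (hproj : ∀ Y, IsProjPSD Y (proj Y)) :
    IsMetricProjection (psdCone n : Set (EuclideanSpace ℝ (Fin n × Fin n)))
      fun v => matrixToEuclidean (proj (matrixToEuclidean.symm v)) := by
  intro v
  obtain ⟨hpsd, hmin⟩ := hproj (matrixToEuclidean.symm v)
  refine ⟨by simpa [psdCone] using hpsd, fun k hk => ?_⟩
  simpa [mNorm_eq_norm_matrixToEuclidean] using hmin (matrixToEuclidean.symm k) hk

theorem phi_convex_and_gradient_general {n m : ℕ}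
    (A : Matrix (Fin n) (Fin n) ℝ →ₗ[ℝ] Vec m)
    (Aadj : Vec m →ₗ[ℝ] Matrix (Fin n) (Fin n) ℝ)
    (hadj : ∀ (X : Matrix (Fin n) (Fin n) ℝ) (ξ : Vec m), ⟪A X, ξ⟫ = mInner X (Aadj ξ))
    (Z : Matrix (Fin n) (Fin n) ℝ) (b : Vec m)
    (proj : Matrix (Fin n) (Fin n) ℝ → Matrix (Fin n) (Fin n) ℝ)
    (hproj : ∀ Y : Matrix (Fin n) (Fin n) ℝ, IsProjPSD Y (proj Y)) :
    let φ : Vec m → ℝ := fun ξ => (1 / 2) * mNorm (proj (Aadj ξ + Z)) ^ 2 - ⟪b, ξ⟫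
    ConvexOn ℝ Set.univ φ ∧
      ∀ ξ : Vec m, HasGradientAt φ (A (proj (Aadj ξ + Z)) - b) ξ := by
  intro φ
  have hp := isMetricProjection_psdCone hproj
  set p := fun v => matrixToEuclidean (proj (matrixToEuclidean.symm v))
  let T : Vec m →L[ℝ] EuclideanSpace ℝ (Fin n × Fin n) :=
    (matrixToEuclidean.toLinearMap ∘ₗ Aadj).toContinuousLinearMap
  have hpT : ∀ ξ, p (T ξ + matrixToEuclidean Z) = matrixToEuclidean (proj (Aadj ξ + Z)) :=
    fun ξ => by simp [p, T]
  have hφ : φ = fun ξ => 1 / 2 * ‖p (T ξ + matrixToEuclidean Z)‖ ^ 2 - ⟪b, ξ⟫ := by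
    funext ξ
    rw [hpT, ← mNorm_eq_norm_matrixToEuclidean]
  rw [hφ]
  refine ⟨hp.convexOn_half_sq_norm.comp_add_sub_inner (T : Vec m →ₗ[ℝ] _) (matrixToEuclidean Z) b,
    fun ξ => ?_⟩
  refine hasGradientAt_comp_add_sub_inner T _ b _ (fun v => ?_) (hp.hasGradientAt_half_sq_norm _)
  rw [hpT, hadj, ← inner_matrixToEuclidean]
  rfl

/-- the dual function `φ(ξ) = ½‖Π_{S^n_+}(A*ξ + Z)‖² − ⟨b, ξ⟩` is convex and
differentiable, with gradient `∇φ(ξ) = A(Π_{S^n_+}(A*ξ + Z)) − b`. -/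
theorem phi_convex_and_gradient {n m : ℕ}
    (A : Matrix (Fin n) (Fin n) ℝ →ₗ[ℝ] Vec m)
    (Aadj : Vec m →ₗ[ℝ] Matrix (Fin n) (Fin n) ℝ)
    (hadj : ∀ (X : Matrix (Fin n) (Fin n) ℝ) (ξ : Vec m), ⟪A X, ξ⟫ = mInner X (Aadj ξ))
    (hAadjSymm : ∀ ξ : Vec m, (Aadj ξ).IsSymm)
    (Z : Matrix (Fin n) (Fin n) ℝ) (hZ : Z.IsSymm) (b : Vec m)
    (proj : Matrix (Fin n) (Fin n) ℝ → Matrix (Fin n) (Fin n) ℝ)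
    (hproj : ∀ Y : Matrix (Fin n) (Fin n) ℝ, IsProjPSD Y (proj Y)) :
    let φ : Vec m → ℝ := fun ξ => (1 / 2) * mNorm (proj (Aadj ξ + Z)) ^ 2 - ⟪b, ξ⟫
    ConvexOn ℝ Set.univ φ ∧
      ∀ ξ : Vec m, HasGradientAt φ (A (proj (Aadj ξ + Z)) - b) ξ :=
  phi_convex_and_gradient_general A Aadj hadj Z b proj hproj
end
end

section
/- Let A : S^n → R^m be a surjective linear map (so AA* is nonsingular), and suppose there exists a positive definite X† ∈ S^n with A(X†) = b (Slater condition). Let Z ∈ S^n and define φ(ξ) = ½‖Π_{S^n_+}(A*ξ + Z)‖² − ⟨b, ξ⟩. Then for every ξ⁰ ∈ R^m the level set { ξ ∈ R^m : φ(ξ) ≤ φ(ξ⁰) } is compact. -/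
set_option autoImplicit false

open Matrix Finset Filter
open scoped RealInnerProductSpace

noncomputable section

/-!
Write `W ξ = A* ξ + Z` and `P = Π(W ξ)`. The residual `P - W ξ` lies in the dual of the PSD cone,
hence is itself PSD, and a positive definite `X†` satisfies `c ‖N‖ ≤ ⟨X†, N⟩` on the PSD cone by
compactness of its unit sphere. Since `⟨b, ξ⟩ = ⟨X†, W ξ⟩ - ⟨X†, Z⟩`, this gives
`φ ξ ≥ ½ (‖P‖ - ‖X†‖)² + c ‖P - W ξ‖ + const`, so on a level set `‖P‖` and `‖P - W ξ‖`, hence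
`‖W ξ‖`, are bounded; `A*` is injective because `A` is onto, so `ξ` is bounded. Level sets are
closed because the projection onto a convex set is 1-Lipschitz.
-/

section NearestPoint

variable {F : Type*} [NormedAddCommGroup F] [InnerProductSpace ℝ F] {K : Set F} {y p : F}

theorem real_inner_sub_le_zero_of_isMinOn (hK : Convex ℝ K) (hp : p ∈ K)
    (hmin : IsMinOn (‖· - y‖) K p) {q : F} (hq : q ∈ K) : ⟪y - p, q - p⟫ ≤ 0 := by
  have : Nonempty K := ⟨⟨p, hp⟩⟩
  refine (norm_eq_iInf_iff_real_inner_le_zero hK hp).1 ?_ q hq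
  refine le_antisymm (le_ciInf fun w => ?_) (ciInf_le ⟨0, ?_⟩ (⟨p, hp⟩ : K))
  · simpa only [norm_sub_rev y] using isMinOn_iff.1 hmin w w.2
  · rintro _ ⟨w, rfl⟩
    exact norm_nonneg _

theorem norm_sub_le_of_real_inner_le_zero {y₁ y₂ p₁ p₂ : F}
    (h₁ : ⟪y₁ - p₁, p₂ - p₁⟫ ≤ 0) (h₂ : ⟪y₂ - p₂, p₁ - p₂⟫ ≤ 0) :
    ‖p₁ - p₂‖ ≤ ‖y₁ - y₂‖ := by
  have key : ‖p₁ - p₂‖ ^ 2 ≤ ⟪y₁ - y₂, p₁ - p₂⟫ := by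
    have : ⟪y₁ - y₂, p₁ - p₂⟫ - ‖p₁ - p₂‖ ^ 2
        = -⟪y₁ - p₁, p₂ - p₁⟫ - ⟪y₂ - p₂, p₁ - p₂⟫ := by
      rw [← real_inner_self_eq_norm_sq]
      simp only [inner_sub_left, inner_sub_right]
      ring
    linarith
  have := key.trans (real_inner_le_norm _ _)
  rcases (norm_nonneg (p₁ - p₂)).eq_or_lt with h | h
  · rw [← h]; exact norm_nonneg _
  · nlinarith

theorem lipschitzWith_one_of_forall_isMinOn (hK : Convex ℝ K) {π : F → F}
    (hπ : ∀ y, π y ∈ K ∧ IsMinOn (‖· - y‖) K (π y)) : LipschitzWith 1 π :=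
  LipschitzWith.of_dist_le_mul fun y₁ y₂ => by
    simpa only [NNReal.coe_one, one_mul, dist_eq_norm] using
      norm_sub_le_of_real_inner_le_zero
        (real_inner_sub_le_zero_of_isMinOn hK (hπ y₁).1 (hπ y₁).2 (hπ y₂).1)
        (real_inner_sub_le_zero_of_isMinOn hK (hπ y₂).1 (hπ y₂).2 (hπ y₁).1)

theorem real_inner_sub_nonneg_of_isMinOn (C : ConvexCone ℝ F) (hp : p ∈ C)
    (hmin : IsMinOn (‖· - y‖) C p) {q : F} (hq : q ∈ C) : 0 ≤ ⟪q, p - y⟫ := by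
  have := real_inner_sub_le_zero_of_isMinOn C.convex hp hmin (C.add_mem hq hp)
  rw [add_sub_cancel_right, real_inner_comm, ← neg_sub, inner_neg_right] at this
  linarith

theorem norm_le_of_half_norm_sq_sub_inner_le {x w p : F} {c L : ℝ} (hc : 0 < c)
    (hcoer : c * ‖p - w‖ ≤ ⟪x, p - w⟫) (h : 1 / 2 * ‖p‖ ^ 2 - ⟪x, w⟫ ≤ L) :
    ‖w‖ ≤ ‖x‖ + √(2 * (L + ‖x‖ ^ 2 / 2)) + (L + ‖x‖ ^ 2 / 2) / c := by
  have hsplit : ⟪x, w⟫ = ⟪x, p⟫ - ⟪x, p - w⟫ := by rw [inner_sub_right]; ring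
  have hM : (‖p‖ - ‖x‖) ^ 2 / 2 + c * ‖p - w‖ ≤ L + ‖x‖ ^ 2 / 2 := by
    nlinarith [real_inner_le_norm x p]
  set M := L + ‖x‖ ^ 2 / 2
  have hp : ‖p‖ ≤ ‖x‖ + √(2 * M) := by
    have := Real.le_sqrt_of_sq_le (show (‖p‖ - ‖x‖) ^ 2 ≤ 2 * M by nlinarith [norm_nonneg (p - w)])
    linarith
  have hpw : ‖p - w‖ ≤ M / c := by
    rw [le_div_iff₀ hc]
    nlinarith [sq_nonneg (‖p‖ - ‖x‖)]
  calc ‖w‖ = ‖p - (p - w)‖ := by rw [sub_sub_cancel]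
    _ ≤ ‖p‖ + ‖p - w‖ := norm_sub_le _ _
    _ ≤ _ := by linarith

end NearestPoint

theorem exists_pos_mul_norm_le_of_pos_on_cone {E : Type*} [NormedAddCommGroup E]
    [NormedSpace ℝ E] [FiniteDimensional ℝ E] (C : ConvexCone ℝ E) (hC : IsClosed (C : Set E))
    (f : E →ₗ[ℝ] ℝ) (hf : ∀ x ∈ C, x ≠ 0 → 0 < f x) :
    ∃ c > 0, ∀ x ∈ C, c * ‖x‖ ≤ f x := by
  obtain ⟨c, hc, hcf⟩ := ((isCompact_sphere (0 : E) 1).inter_left hC).exists_forall_le'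
    f.continuous_of_finiteDimensional.continuousOn
    fun x hx => hf x hx.1 (ne_zero_of_mem_unit_sphere ⟨x, hx.2⟩)
  refine ⟨c, hc, fun x hx => ?_⟩
  rcases eq_or_ne x 0 with rfl | hx0
  · simp
  have hnorm : 0 < ‖x‖ := norm_pos_iff.2 hx0
  have := hcf (‖x‖⁻¹ • x) ⟨C.smul_mem (inv_pos.2 hnorm) hx, by simp [norm_smul, hnorm.ne']⟩
  rw [map_smul, smul_eq_mul] at this
  rwa [← le_inv_mul_iff₀' hnorm]

namespace Matrix

/- Flattening turns the trace inner product `mInner` into the Euclidean one, so the projection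
theory of real inner product spaces applies to matrices. -/
def toEuclideanSpace {m n : Type*} : Matrix m n ℝ ≃ₗ[ℝ] EuclideanSpace ℝ (m × n) where
  toFun X := WithLp.toLp 2 fun p => X p.1 p.2
  invFun y := of fun i j => y (i, j)
  map_add' _ _ := rfl
  map_smul' _ _ := rfl
  left_inv _ := rfl
  right_inv _ := rfl

theorem inner_toEuclideanSpace {m n : Type*} [Fintype m] [Fintype n] (X Y : Matrix m n ℝ) :
    ⟪toEuclideanSpace X, toEuclideanSpace Y⟫ = (Xᵀ * Y).trace := by
  simp only [PiLp.inner_apply, RCLike.inner_apply, conj_trivial, trace, diag, mul_apply,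
    transpose_apply, Fintype.sum_prod_type]
  rw [Finset.sum_comm]
  exact Finset.sum_congr rfl fun _ _ => Finset.sum_congr rfl fun _ _ => mul_comm _ _

theorem norm_toEuclideanSpace {n : ℕ} (X : Matrix (Fin n) (Fin n) ℝ) :
    ‖toEuclideanSpace X‖ = mNorm X := by
  rw [mNorm, mInner, ← inner_toEuclideanSpace, real_inner_self_eq_norm_sq,
    Real.sqrt_sq (norm_nonneg _)]

variable {ι : Type*}

variable (ι) in
def psdCone : ConvexCone ℝ (EuclideanSpace ℝ (ι × ι)) where
  carrier := {y | (toEuclideanSpace.symm y).PosSemidef}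
  smul_mem' c hc y hy := by simpa using hy.smul hc.le
  add_mem' y hy z hz := by simpa using hy.add hz

@[simp]
theorem toEuclideanSpace_mem_psdCone {X : Matrix ι ι ℝ} :
    toEuclideanSpace X ∈ psdCone ι ↔ X.PosSemidef :=
  Iff.rfl

variable [Fintype ι]

theorem inner_toEuclideanSpace_vecMulVec (x : ι → ℝ) (M : Matrix ι ι ℝ) :
    ⟪toEuclideanSpace (vecMulVec x x), toEuclideanSpace M⟫ = x ⬝ᵥ M *ᵥ x := by
  rw [inner_toEuclideanSpace, transpose_vecMulVec, vecMulVec_mul, trace_vecMulVec,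
    dotProduct_mulVec, dotProduct_comm]

theorem isClosed_psdCone : IsClosed (psdCone ι : Set (EuclideanSpace ℝ (ι × ι))) := by
  have hcont : Continuous (toEuclideanSpace.symm : EuclideanSpace ℝ (ι × ι) → Matrix ι ι ℝ) :=
    LinearMap.continuous_of_finiteDimensional (toEuclideanSpace.symm : _ ≃ₗ[ℝ] _).toLinearMap
  have hclosed : IsClosed {M : Matrix ι ι ℝ | M.PosSemidef} := by
    simp only [posSemidef_iff_dotProduct_mulVec, Set.ofPred_and, Set.ofPred_forall]
    exact (isClosed_eq continuous_id.matrix_conjTranspose continuous_id).inter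
      (isClosed_iInter fun x => isClosed_le continuous_const
        (continuous_const.dotProduct (continuous_id.matrix_mulVec continuous_const)))
  exact hclosed.preimage hcont

/- Symmetry is needed: in all of `Matrix ι ι ℝ` the dual of the PSD cone also contains the
skew-symmetric matrices. -/
theorem posSemidef_of_forall_inner_nonneg {M : Matrix ι ι ℝ} (hM : M.IsSymm)
    (h : ∀ q ∈ psdCone ι, 0 ≤ ⟪q, toEuclideanSpace M⟫) : M.PosSemidef :=
  .of_dotProduct_mulVec_nonneg hM fun x => by
    simpa [inner_toEuclideanSpace_vecMulVec] using
      h _ (toEuclideanSpace_mem_psdCone.2 (posSemidef_vecMulVec_self_star x))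

theorem PosDef.inner_pos {X : Matrix ι ι ℝ} (hX : X.PosDef) {y : EuclideanSpace ℝ (ι × ι)}
    (hy : y ∈ psdCone ι) (hy0 : y ≠ 0) : 0 < ⟪toEuclideanSpace X, y⟫ := by
  obtain ⟨k, v, hv⟩ := posSemidef_iff_eq_sum_vecMulVec.1 hy
  have hy' : y = ∑ i, toEuclideanSpace (vecMulVec (v i) (v i)) := by
    simpa [← map_sum] using congrArg toEuclideanSpace hv
  obtain ⟨i, hi⟩ : ∃ i, v i ≠ 0 := by
    by_contra! h
    exact hy0 (by simp [hy', h])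
  rw [hy', inner_sum]
  refine Finset.sum_pos' (fun j _ => ?_) ⟨i, Finset.mem_univ _, ?_⟩ <;>
    rw [real_inner_comm, inner_toEuclideanSpace_vecMulVec]
  · simpa using hX.posSemidef.dotProduct_mulVec_nonneg (v j)
  · simpa using hX.dotProduct_mulVec_pos hi

end Matrix

theorem injective_of_surjective_of_inner_eq {E F : Type*} [NormedAddCommGroup E]
    [InnerProductSpace ℝ E] [NormedAddCommGroup F] [InnerProductSpace ℝ F] {A : E → F}
    {B : F →ₗ[ℝ] E} (hA : Function.Surjective A) (hadj : ∀ x y, ⟪A x, y⟫ = ⟪x, B y⟫) :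
    Function.Injective B :=
  (injective_iff_map_eq_zero B).2 fun y hy => by
    obtain ⟨x, rfl⟩ := hA y
    simpa [hy] using hadj x (A x)

section Projection

variable {n : ℕ} {proj : Matrix (Fin n) (Fin n) ℝ → Matrix (Fin n) (Fin n) ℝ}

theorem IsProjPSD.isMinOn {Y P : Matrix (Fin n) (Fin n) ℝ} (h : IsProjPSD Y P) :
    IsMinOn (‖· - toEuclideanSpace Y‖) (psdCone (Fin n)) (toEuclideanSpace P) :=
  isMinOn_iff.2 fun q hq => by
    obtain ⟨Q, rfl⟩ := toEuclideanSpace.surjective q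
    simpa [← map_sub, norm_toEuclideanSpace] using h.2 _ hq

theorem IsProjPSD.posSemidef_sub {Y P : Matrix (Fin n) (Fin n) ℝ} (h : IsProjPSD Y P)
    (hY : Y.IsSymm) : (P - Y).PosSemidef :=
  posSemidef_of_forall_inner_nonneg ((show P.IsSymm from h.1.1).sub hY) fun _ hq => by
    simpa only [map_sub] using real_inner_sub_nonneg_of_isMinOn (psdCone _) h.1 h.isMinOn hq

theorem lipschitzWith_one_toEuclideanSpace_proj (hproj : ∀ Y, IsProjPSD Y (proj Y)) :
    LipschitzWith 1 fun y => toEuclideanSpace (proj (toEuclideanSpace.symm y)) :=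
  lipschitzWith_one_of_forall_isMinOn (psdCone (Fin n)).convex fun y => by
    have h := hproj (toEuclideanSpace.symm y)
    refine ⟨toEuclideanSpace_mem_psdCone.2 h.1, ?_⟩
    simpa only [LinearEquiv.apply_symm_apply] using h.isMinOn

theorem isBounded_setOf_half_norm_sq_proj_sub_inner_le {X : Matrix (Fin n) (Fin n) ℝ}
    (hX : X.PosDef) (hproj : ∀ Y, IsProjPSD Y (proj Y)) (L : ℝ) :
    Bornology.IsBounded {w : EuclideanSpace ℝ (Fin n × Fin n) |
      (toEuclideanSpace.symm w).IsSymm ∧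
        1 / 2 * ‖toEuclideanSpace (proj (toEuclideanSpace.symm w))‖ ^ 2
          - ⟪toEuclideanSpace X, w⟫ ≤ L} := by
  obtain ⟨c, hc, hcoer⟩ := exists_pos_mul_norm_le_of_pos_on_cone (psdCone (Fin n))
    isClosed_psdCone (innerₗ _ (toEuclideanSpace X)) fun y hy hy0 => hX.inner_pos hy hy0
  refine (Metric.isBounded_iff_subset_closedBall 0).2 ⟨_, fun w ⟨hsymm, hw⟩ =>
    mem_closedBall_zero_iff.2 (norm_le_of_half_norm_sq_sub_inner_le hc ?_ hw)⟩
  have hres := hcoer _ (toEuclideanSpace_mem_psdCone.2 ((hproj _).posSemidef_sub hsymm))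
  rwa [map_sub, LinearEquiv.apply_symm_apply, innerₗ_apply_apply] at hres

end Projection

/-- under surjectivity of `A` and the Slater condition, the level sets of
`φ(ξ) = ½‖Π_{S^n_+}(A*ξ + Z)‖² − ⟨b, ξ⟩` are compact. -/
theorem phi_level_sets_compact {n m : ℕ}
    (A : Matrix (Fin n) (Fin n) ℝ →ₗ[ℝ] Vec m)
    (Aadj : Vec m →ₗ[ℝ] Matrix (Fin n) (Fin n) ℝ)
    (hadj : ∀ (X : Matrix (Fin n) (Fin n) ℝ) (ξ : Vec m), ⟪A X, ξ⟫ = mInner X (Aadj ξ))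
    (hAadjSymm : ∀ ξ : Vec m, (Aadj ξ).IsSymm)
    (hsurj : Function.Surjective ⇑A)
    (b : Vec m)
    -- Slater condition
    (Xdag : Matrix (Fin n) (Fin n) ℝ) (hXdag : Xdag.PosDef) (hAXdag : A Xdag = b)
    (Z : Matrix (Fin n) (Fin n) ℝ) (hZ : Z.IsSymm)
    (proj : Matrix (Fin n) (Fin n) ℝ → Matrix (Fin n) (Fin n) ℝ)
    (hproj : ∀ Y : Matrix (Fin n) (Fin n) ℝ, IsProjPSD Y (proj Y)) :
    let φ : Vec m → ℝ := fun ξ => (1 / 2) * mNorm (proj (Aadj ξ + Z)) ^ 2 - ⟪b, ξ⟫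
    ∀ ξ0 : Vec m, IsCompact {ξ : Vec m | φ ξ ≤ φ ξ0} := by
  intro φ ξ0
  let B : Vec m →ₗ[ℝ] EuclideanSpace ℝ (Fin n × Fin n) := toEuclideanSpace.toLinearMap ∘ₗ Aadj
  let W : Vec m → EuclideanSpace ℝ (Fin n × Fin n) := fun ξ => B ξ + toEuclideanSpace Z
  have hB : Function.Injective B :=
    injective_of_surjective_of_inner_eq (hsurj.comp toEuclideanSpace.symm.surjective) fun X ξ => by
      obtain ⟨X, rfl⟩ := toEuclideanSpace.surjective X
      simp [B, hadj, mInner, inner_toEuclideanSpace]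
  obtain ⟨K, -, hK⟩ := B.exists_antilipschitzWith (LinearMap.ker_eq_bot.2 hB)
  have hW : AntilipschitzWith K W :=
    .of_le_mul_dist fun ξ η => by simpa [W, dist_add_right] using hK.le_mul_dist ξ η
  have hφ : ∀ ξ, φ ξ = 1 / 2 * ‖toEuclideanSpace (proj (toEuclideanSpace.symm (W ξ)))‖ ^ 2
      - ⟪toEuclideanSpace Xdag, W ξ⟫ + ⟪toEuclideanSpace Xdag, toEuclideanSpace Z⟫ := fun ξ => by
    simp only [φ, W, B, ← norm_toEuclideanSpace, ← hAXdag, hadj, mInner, LinearMap.coe_comp,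
      LinearEquiv.coe_coe, Function.comp_apply, map_add, LinearEquiv.symm_apply_apply,
      inner_add_right, inner_toEuclideanSpace]
    ring
  have hcont : Continuous φ := by
    have hWc : Continuous W := B.continuous_of_finiteDimensional.add continuous_const
    refine (continuous_congr hφ).2 (.add (.sub (continuous_const.mul (.pow (.norm ?_) 2))
      (continuous_const.inner hWc)) continuous_const)
    exact (lipschitzWith_one_toEuclideanSpace_proj hproj).continuous.comp hWc
  refine Metric.isCompact_of_isClosed_isBounded (isClosed_le hcont continuous_const) ?_
  refine (hW.isBounded_preimage (isBounded_setOf_half_norm_sq_proj_sub_inner_le hXdag hproj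
    (φ ξ0 - ⟪toEuclideanSpace Xdag, toEuclideanSpace Z⟫))).subset fun ξ hξ => ⟨?_, ?_⟩
  · simpa [W, B] using (hAadjSymm ξ).add hZ
  · have := hφ ξ
    linarith [show φ ξ ≤ φ ξ0 from hξ]
end
end

section
/- Let X ∈ S^n with X ⪰ 0, A(X) = b and trace(X) ≤ M_b for some M_b > 0, and let y ∈ R^m be such that λ_min(C − A*y) ≤ 0, where λ_min denotes the smallest eigenvalue. Then ⟨C, X⟩ ≥ ⟨b, y⟩ + M_b · λ_min(C − A*y). In particular, ⟨b, y⟩ + M_b λ_min(C − A*y) is a lower bound on the optimal value of (P) restricted to feasible X with trace(X) ≤ M_b. -/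
set_option autoImplicit false

open Matrix Finset Filter
open scoped RealInnerProductSpace

noncomputable section

/-!
Weak duality: `⟨C, X⟩ - ⟨b, y⟩ = ⟨C - A*y, X⟩` for feasible `X`. Since every eigenvalue of the
symmetric matrix `C - A*y` is at least `λ_min`, the matrix `C - A*y - λ_min I` is positive
semidefinite, and pairing it with the positive semidefinite `X` gives
`⟨C - A*y, X⟩ ≥ λ_min trace X ≥ M_b λ_min`, the last step because `λ_min ≤ 0`.
-/

section TraceInner

variable {n : ℕ}

lemma mInner_comm (X Y : Matrix (Fin n) (Fin n) ℝ) : mInner X Y = mInner Y X := by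
  rw [mInner, mInner, ← trace_transpose, transpose_mul, transpose_transpose]

lemma mInner_sub_left (X Y Z : Matrix (Fin n) (Fin n) ℝ) :
    mInner (X - Y) Z = mInner X Z - mInner Y Z := by
  simp only [mInner, transpose_sub, Matrix.sub_mul, trace_sub]

lemma mInner_smul_one_left (c : ℝ) (X : Matrix (Fin n) (Fin n) ℝ) :
    mInner (c • 1) X = c * X.trace := by
  simp [mInner]

lemma mInner_nonneg_of_posSemidef_s16 {M X : Matrix (Fin n) (Fin n) ℝ}
    (hM : M.PosSemidef) (hX : X.PosSemidef) : 0 ≤ mInner M X := by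
  obtain ⟨B, rfl⟩ : ∃ B : Matrix (Fin n) (Fin n) ℝ, X = Bᴴ * B := by
    open scoped MatrixOrder in exact CStarAlgebra.nonneg_iff_eq_star_mul_self.mp hX.nonneg
  have hMt : Mᵀ = M := by
    rw [← conjTranspose_eq_transpose_of_trivial]; exact hM.isHermitian
  rw [mInner, hMt, ← Matrix.mul_assoc, trace_mul_comm, ← Matrix.mul_assoc]
  exact (hM.mul_mul_conjTranspose_same B).trace_nonneg

open scoped MatrixOrder in
lemma posSemidef_sub_smul_one_of_le_eigenvalues {M : Matrix (Fin n) (Fin n) ℝ}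
    (hM : M.IsHermitian) {l : ℝ} (hl : ∀ i, l ≤ hM.eigenvalues i) : (M - l • 1).PosSemidef := by
  rw [← Matrix.le_iff, ← Algebra.algebraMap_eq_smul_one,
    algebraMap_le_iff_le_spectrum (ha := hM.isSelfAdjoint), hM.spectrum_real_eq_range_eigenvalues]
  rintro _ ⟨i, rfl⟩
  exact hl i

lemma mul_trace_le_mInner_of_le_eigenvalues {M X : Matrix (Fin n) (Fin n) ℝ}
    (hM : M.IsHermitian) {l : ℝ} (hl : ∀ i, l ≤ hM.eigenvalues i) (hX : X.PosSemidef) :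
    l * X.trace ≤ mInner M X := by
  have h := mInner_nonneg_of_posSemidef_s16 (posSemidef_sub_smul_one_of_le_eigenvalues hM hl) hX
  rw [mInner_sub_left, mInner_smul_one_left] at h
  linarith

end TraceInner

theorem suboptimality_lower_bound_general {n m : ℕ}
    (A : Matrix (Fin n) (Fin n) ℝ →ₗ[ℝ] Vec m)
    (Aadj : Vec m →ₗ[ℝ] Matrix (Fin n) (Fin n) ℝ)
    (hadj : ∀ (X : Matrix (Fin n) (Fin n) ℝ) (ξ : Vec m), ⟪A X, ξ⟫ = mInner X (Aadj ξ))
    (b : Vec m) (C : Matrix (Fin n) (Fin n) ℝ)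
    (X : Matrix (Fin n) (Fin n) ℝ) (hX : X.PosSemidef) (hAX : A X = b)
    (Mb : ℝ) (htr : X.trace ≤ Mb)
    (y : Vec m) (hHerm : (C - Aadj y).IsHermitian)
    -- `l` is the smallest eigenvalue of `C − A*y`, assumed nonpositive
    (l : ℝ)
    (hlmin : ∀ i, l ≤ hHerm.eigenvalues i) (hl0 : l ≤ 0) :
    mInner C X ≥ ⟪b, y⟫ + Mb * l := by
  have hdual : ⟪b, y⟫ = mInner C X - mInner (C - Aadj y) X := by
    rw [mInner_sub_left, mInner_comm (Aadj y), ← hadj, hAX]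
    ring
  have hpair := mul_trace_le_mInner_of_le_eigenvalues hHerm hlmin hX
  have htrace := mul_le_mul_of_nonpos_left htr hl0
  linarith

/-- the suboptimality certificate — for any feasible `X` with `trace X ≤ M_b`
and any `y`, `⟨b, y⟩ + M_b λ_min(C − A*y)` is a lower bound on `⟨C, X⟩`. -/
theorem suboptimality_lower_bound {n m : ℕ}
    (A : Matrix (Fin n) (Fin n) ℝ →ₗ[ℝ] Vec m)
    (Aadj : Vec m →ₗ[ℝ] Matrix (Fin n) (Fin n) ℝ)
    (hadj : ∀ (X : Matrix (Fin n) (Fin n) ℝ) (ξ : Vec m), ⟪A X, ξ⟫ = mInner X (Aadj ξ))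
    (b : Vec m) (C : Matrix (Fin n) (Fin n) ℝ) (hC : C.IsSymm)
    (X : Matrix (Fin n) (Fin n) ℝ) (hX : X.PosSemidef) (hAX : A X = b)
    (Mb : ℝ) (hMb : 0 < Mb) (htr : X.trace ≤ Mb)
    (y : Vec m) (hHerm : (C - Aadj y).IsHermitian)
    -- `l` is the smallest eigenvalue of `C − A*y`, assumed nonpositive
    (l : ℝ) (hlmem : ∃ i, hHerm.eigenvalues i = l)
    (hlmin : ∀ i, l ≤ hHerm.eigenvalues i) (hl0 : l ≤ 0) :
    mInner C X ≥ ⟪b, y⟫ + Mb * l :=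
  suboptimality_lower_bound_general A Aadj hadj b C X hX hAX Mb htr y hHerm l hlmin hl0
end
end
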